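/- For all real x, y and λ > 0, the integral ∫_y^∞ φ(λ + (x−z)/(2λ)) e^{−z} z² dz equals (8λ⁵ − 8λ³x + 8λ³ + 2λx²) e^{−x} (1 − Φ(λ + (y−x)/(2λ))) + (−8λ⁴ + 4λ²x + 4λ²y) e^{−x} φ(λ + (y−x)/(2λ)). -/

import Mathlib

open Real MeasureTheory Filter Set

/-- Standard normal density. -/
noncomputable def phi (t : ℝ) : ℝ := (Real.sqrt (2 * Real.pi))⁻¹ * Real.exp (-t ^ 2 / 2)

/-- Standard normal distribution function. -/
noncomputable def Phi (t : ℝ) : ℝ := ∫ s in Set.Iic t, phi s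

open Topology ProbabilityTheory

/-! Completing the square gives `φ(λ + (x - z)/(2λ)) e^{-z} = e^{-x} φ(σ z)` with
`σ z = λ + (z - x)/(2λ)`. Substituting `s = σ z`, i.e. `z = x - 2λ² + 2λ s`, turns the integral into
`2λ e^{-x} ∫_{σ y}^∞ (a + b s)² φ(s) ds` with `a = x - 2λ²`, `b = 2λ`. Since `φ' = -s φ`, the
function `-(a² + b²)(1 - Φ) - (2ab + b² s) φ` is an antiderivative of `(a + b s)² φ` that vanishes
at `+∞`. -/

lemma phi_eq_gaussianPDFReal : phi = gaussianPDFReal 0 1 := by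
  ext t; simp [phi, gaussianPDFReal_def]

lemma continuous_phi : Continuous phi := by
  unfold phi; fun_prop

lemma phi_nonneg (t : ℝ) : 0 ≤ phi t := by
  unfold phi; positivity

lemma integrable_phi : Integrable phi :=
  phi_eq_gaussianPDFReal ▸ integrable_gaussianPDFReal 0 1

lemma integral_phi : ∫ t, phi t = 1 :=
  phi_eq_gaussianPDFReal ▸ integral_gaussianPDFReal_eq_one 0 one_ne_zero

lemma hasDerivAt_phi (t : ℝ) : HasDerivAt phi (-t * phi t) t := by
  have h : HasDerivAt (fun s : ℝ => -s ^ 2 / 2) (-t) t :=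
    ((hasDerivAt_pow 2 t).neg.div_const 2).congr_deriv (by ring)
  exact (h.exp.const_mul (√(2 * π))⁻¹).congr_deriv (by unfold phi; ring)

lemma hasDerivAt_Phi (t : ℝ) : HasDerivAt Phi (phi t) t := by
  have hPhi : Phi = fun t => Phi 0 + ∫ u in (0:ℝ)..t, phi u := by
    funext t
    have := intervalIntegral.integral_Iic_sub_Iic (integrable_phi.integrableOn (s := Iic 0))
      (integrable_phi.integrableOn (s := Iic t))
    unfold Phi
    linarith
  rw [hPhi]
  simpa using intervalIntegral.integral_hasDerivAt_right integrable_phi.intervalIntegrable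
    continuous_phi.aestronglyMeasurable.stronglyMeasurableAtFilter continuous_phi.continuousAt

lemma tendsto_Phi_atTop : Tendsto Phi atTop (𝓝 1) := by
  have h := tendsto_setIntegral_of_monotone (μ := volume) (fun t : ℝ => measurableSet_Iic)
    (fun _ _ hab => Iic_subset_Iic.2 hab) (by rw [iUnion_Iic]; exact integrable_phi.integrableOn)
  rwa [iUnion_Iic, Measure.restrict_univ, integral_phi] at h

lemma tendsto_pow_mul_phi_atTop (n : ℕ) : Tendsto (fun s => s ^ n * phi s) atTop (𝓝 0) := by
  have h := (rpow_mul_exp_neg_mul_sq_isLittleO_exp_neg (b := 1 / 2) (by norm_num) n).trans_tendsto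
    (tendsto_exp_atBot.comp (tendsto_id.const_mul_atTop_of_neg (by norm_num : -(1 / 2 : ℝ) < 0)))
  simpa using (h.const_mul (√(2 * π))⁻¹).congr fun s => by
    rw [rpow_natCast, phi]; ring_nf

lemma integral_comp_mul_add_Ioi {E : Type*} [NormedAddCommGroup E] [NormedSpace ℝ E]
    (g : ℝ → E) {c : ℝ} (hc : 0 < c) (d y : ℝ) :
    ∫ z in Ioi y, g (c * z + d) = c⁻¹ • ∫ s in Ioi (c * y + d), g s := by
  rw [integral_comp_mul_left_Ioi (fun u => g (u + d)) y hc]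
  congr 1
  have := (measurePreserving_add_right volume d).setIntegral_preimage_emb
    (measurableEmbedding_addRight d) g (Ioi (c * y + d))
  simpa using this

lemma integral_Ioi_sq_mul_phi (a b t : ℝ) :
    ∫ s in Ioi t, (a + b * s) ^ 2 * phi s
      = (a ^ 2 + b ^ 2) * (1 - Phi t) + (2 * a * b + b ^ 2 * t) * phi t := by
  set F : ℝ → ℝ := fun s => -((a ^ 2 + b ^ 2) * (1 - Phi s)) - (2 * a * b + b ^ 2 * s) * phi s
  have hF : ∀ s ∈ Ici t, HasDerivAt F ((a + b * s) ^ 2 * phi s) s := fun s _ => by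
    have := (((hasDerivAt_Phi s).const_sub 1).const_mul (a ^ 2 + b ^ 2)).neg.sub
      ((((hasDerivAt_id s).const_mul (b ^ 2)).const_add (2 * a * b)).mul (hasDerivAt_phi s))
    exact this.congr_deriv (by simp only [id_eq]; ring)
  have hF_lim : Tendsto F atTop (𝓝 0) := by
    have := ((tendsto_Phi_atTop.const_sub 1).const_mul (a ^ 2 + b ^ 2)).neg.sub
      (((tendsto_pow_mul_phi_atTop 0).const_mul (2 * a * b)).add
        ((tendsto_pow_mul_phi_atTop 1).const_mul (b ^ 2)))
    simpa using this.congr fun s => by simp only [F]; ring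
  rw [integral_Ioi_of_hasDerivAt_of_nonneg' hF (fun s _ => by have := phi_nonneg s; positivity)
    hF_lim]
  simp only [F]
  ring

lemma phi_mul_exp_neg (x z l : ℝ) (hl : l ≠ 0) :
    phi (l + (x - z) / (2 * l)) * exp (-z) = exp (-x) * phi (l + (z - x) / (2 * l)) := by
  unfold phi
  rw [mul_assoc, ← exp_add, mul_left_comm, ← exp_add]
  congr 2
  field_simp
  ring

theorem stmt2 (x y l : ℝ) (hl : 0 < l) :
    (∫ z in Set.Ioi y, phi (l + (x - z) / (2 * l)) * Real.exp (-z) * z ^ 2)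
      = (8 * l ^ 5 - 8 * l ^ 3 * x + 8 * l ^ 3 + 2 * l * x ^ 2) * Real.exp (-x)
          * (1 - Phi (l + (y - x) / (2 * l)))
        + (-8 * l ^ 4 + 4 * l ^ 2 * x + 4 * l ^ 2 * y) * Real.exp (-x)
          * phi (l + (y - x) / (2 * l)) := by
  have hσ : ∀ z, (2 * l)⁻¹ * z + (l - x / (2 * l)) = l + (z - x) / (2 * l) := fun z => by ring
  have hz : ∀ z, x - 2 * l ^ 2 + 2 * l * (l + (z - x) / (2 * l)) = z := fun z => by
    field_simp; ring
  have hsub := integral_comp_mul_add_Ioi (fun s => (x - 2 * l ^ 2 + 2 * l * s) ^ 2 * phi s)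
    (inv_pos.2 (by positivity : 0 < 2 * l)) (l - x / (2 * l)) y
  simp only [hσ, hz, smul_eq_mul, integral_Ioi_sq_mul_phi] at hsub
  calc _ = ∫ z in Ioi y, exp (-x) * (z ^ 2 * phi (l + (z - x) / (2 * l))) := by
        congr 1 with z
        rw [phi_mul_exp_neg x z l hl.ne']
        ring
    _ = _ := by
        rw [integral_const_mul, hsub]
        field_simp
        ring
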